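/- arXiv:1208.5029 — 2 statements merged into one kernel-verified Lean document; each statement's English description precedes it below -/
import Mathlib

section
/- Let I : ℝ^N → ℝ be continuous, grow at least quadratically (there exist c > 0, R such that I(x) ≥ c‖x‖² for ‖x‖ ≥ R), and attain its minimum over a measurable set A at x* lying in the interior of A. Then lim_{ε→0} ε² · log ∫_A (2π ε² σ² Δt)^{-N/2} · exp(-I(x)/ε²) dx = -I(x*). -/
open MeasureTheory Filter Real Topology Set

/-!
Write `m = I x*`. On `A` we have `I ≥ m`, so for `ε ≤ 1` the integrand is dominated by
`exp (m - m / ε²) · exp (-I)`, and `∫_A exp (-I x / ε²) dx ≤ K exp (-m / ε²)`. Conversely `x*` is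
an interior point, so for every `δ > 0` some ball around `x*` lies in `A` and carries `I ≤ m + δ`,
whence `∫_A exp (-I x / ε²) dx ≥ v exp (-(m + δ) / ε²)` with `v > 0` the volume of that ball.
Multiplied by `ε²`, the logarithms of `K`, `v` and of the Gaussian prefactor vanish in the limit.
Quadratic growth makes `exp (-I)` integrable, by comparison with a Gaussian.
-/

theorem integrable_exp_neg_mul_sq_norm {V : Type*} [NormedAddCommGroup V] [InnerProductSpace ℝ V]
    [FiniteDimensional ℝ V] [MeasurableSpace V] [BorelSpace V] {b : ℝ} (hb : 0 < b) :
    Integrable (fun x : V => exp (-b * ‖x‖ ^ 2)) :=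
  Integrable.of_integral_ne_zero <| by
    rw [GaussianFourier.integral_rexp_neg_mul_sq_norm hb]; positivity

theorem exists_mul_sq_norm_sub_le {E : Type*} [NormedAddCommGroup E] [ProperSpace E]
    {I : E → ℝ} (hI : Continuous I) {c R : ℝ} (hR : ∀ x, R ≤ ‖x‖ → c * ‖x‖ ^ 2 ≤ I x) :
    ∃ C, ∀ x, c * ‖x‖ ^ 2 - C ≤ I x := by
  obtain ⟨C, hC⟩ := (isCompact_closedBall (0 : E) R).bddAbove_image
    (f := fun x => c * ‖x‖ ^ 2 - I x) (by fun_prop)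
  refine ⟨max C 0, fun x => ?_⟩
  rcases le_or_gt R ‖x‖ with hx | hx
  · linarith [hR x hx, le_max_right C 0]
  · have := hC (mem_image_of_mem _ (mem_closedBall_zero_iff.2 hx.le))
    linarith [le_max_left C 0]

theorem integrable_exp_neg_of_quadratic_growth {V : Type*} [NormedAddCommGroup V]
    [InnerProductSpace ℝ V] [FiniteDimensional ℝ V] [MeasurableSpace V] [BorelSpace V]
    {I : V → ℝ} (hI : Continuous I) {c R : ℝ} (hc : 0 < c)
    (hR : ∀ x, R ≤ ‖x‖ → c * ‖x‖ ^ 2 ≤ I x) :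
    Integrable (fun x => exp (-I x)) := by
  obtain ⟨C, hC⟩ := exists_mul_sq_norm_sub_le hI hR
  refine ((integrable_exp_neg_mul_sq_norm hc).const_mul (exp C)).mono' (by fun_prop)
    (.of_forall fun x => ?_)
  rw [norm_of_nonneg (exp_nonneg _), ← exp_add, exp_le_exp]
  linarith [hC x]

theorem exp_neg_div_sq_le {m y ε : ℝ} (hmy : m ≤ y) (hε : 0 < ε) (hε1 : ε ≤ 1) :
    exp (-y / ε ^ 2) ≤ exp (m - m / ε ^ 2) * exp (-y) := by
  have h : y - m ≤ (y - m) / ε ^ 2 := le_div_self (by linarith) (by positivity) (by nlinarith)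
  rw [sub_div] at h
  rw [← exp_add, exp_le_exp, neg_div]
  linarith

theorem tendsto_sq_mul_log_rpow_mul_sq {a : ℝ} (ha : 0 < a) (q : ℝ) :
    Tendsto (fun ε : ℝ => ε ^ 2 * log ((a * ε ^ 2) ^ q)) (𝓝[>] 0) (𝓝 0) := by
  have hcont : Continuous fun ε : ℝ => q / a * (a * ε ^ 2 * log (a * ε ^ 2)) :=
    continuous_const.mul (continuous_mul_log.comp (by fun_prop))
  have hlim : Tendsto (fun ε : ℝ => q / a * (a * ε ^ 2 * log (a * ε ^ 2))) (𝓝[>] 0) (𝓝 0) := by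
    simpa using (hcont.tendsto 0).mono_left nhdsWithin_le_nhds
  refine hlim.congr' ?_
  filter_upwards [self_mem_nhdsWithin] with ε (hε : 0 < ε)
  rw [log_rpow (by positivity)]
  field_simp

theorem tendsto_sq_mul_log_of_exp_bounds {g : ℝ → ℝ} {m : ℝ}
    (hlow : ∀ δ > 0, ∃ v > 0, ∀ᶠ ε in 𝓝[>] 0, v * exp (-(m + δ) / ε ^ 2) ≤ g ε)
    (hup : ∃ K, ∀ᶠ ε in 𝓝[>] 0, g ε ≤ K * exp (-m / ε ^ 2)) :
    Tendsto (fun ε => ε ^ 2 * log (g ε)) (𝓝[>] 0) (𝓝 (-m)) := by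
  have hsq (b : ℝ) : Tendsto (fun ε : ℝ => ε ^ 2 * b) (𝓝[>] 0) (𝓝 0) := by
    simpa using ((by fun_prop : Continuous fun ε : ℝ => ε ^ 2 * b).tendsto 0).mono_left
      nhdsWithin_le_nhds
  have hlog_exp {K a ε : ℝ} (hK : 0 < K) (hε : 0 < ε) :
      ε ^ 2 * log (K * exp (a / ε ^ 2)) = ε ^ 2 * log K + a := by
    rw [log_mul hK.ne' (exp_pos _).ne', log_exp]
    field_simp
  refine tendsto_order.2 ⟨fun a ha => ?_, fun b hb => ?_⟩
  · obtain ⟨v, hv, hvg⟩ := hlow ((-m - a) / 2) (by linarith)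
    filter_upwards [hvg, (hsq (log v)).eventually (lt_mem_nhds (by linarith : -((-m - a) / 2) < 0)),
      self_mem_nhdsWithin] with ε hg hv' hε
    calc a < ε ^ 2 * log v + -(m + (-m - a) / 2) := by linarith
      _ = ε ^ 2 * log (v * exp (-(m + (-m - a) / 2) / ε ^ 2)) := (hlog_exp hv hε).symm
      _ ≤ ε ^ 2 * log (g ε) := by gcongr
  · obtain ⟨v, hv, hvg⟩ := hlow 1 one_pos
    obtain ⟨K, hK⟩ := hup
    filter_upwards [hvg, hK, (hsq (log K)).eventually (gt_mem_nhds (by linarith : 0 < b + m)),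
      self_mem_nhdsWithin] with ε hvg hgK hK' hε
    have hg : 0 < g ε := lt_of_lt_of_le (by positivity) hvg
    have hK0 : 0 < K := pos_of_mul_pos_left (hg.trans_le hgK) (exp_pos _).le
    calc ε ^ 2 * log (g ε) ≤ ε ^ 2 * log (K * exp (-m / ε ^ 2)) := by gcongr
      _ = ε ^ 2 * log K + -m := hlog_exp hK0 hε
      _ < b := by linarith

section Laplace

variable {α : Type*} [MeasurableSpace α] {μ : Measure α} {I : α → ℝ} {A : Set α} {m : ℝ}

theorem integrableOn_exp_neg_div_sq (hI : Measurable I) (hA : MeasurableSet A)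
    (hmin : ∀ x ∈ A, m ≤ I x) (hint : IntegrableOn (fun x => exp (-I x)) A μ) {ε : ℝ}
    (hε : 0 < ε) (hε1 : ε ≤ 1) :
    IntegrableOn (fun x => exp (-I x / ε ^ 2)) A μ := by
  refine (hint.const_mul (exp (m - m / ε ^ 2))).mono' (by fun_prop)
    ((ae_restrict_iff' hA).2 (.of_forall fun x hx => ?_))
  rw [norm_of_nonneg (exp_nonneg _)]
  exact exp_neg_div_sq_le (hmin x hx) hε hε1

theorem setIntegral_exp_neg_div_sq_le (hI : Measurable I) (hA : MeasurableSet A)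
    (hmin : ∀ x ∈ A, m ≤ I x) (hint : IntegrableOn (fun x => exp (-I x)) A μ) {ε : ℝ}
    (hε : 0 < ε) (hε1 : ε ≤ 1) :
    ∫ x in A, exp (-I x / ε ^ 2) ∂μ ≤ exp (m - m / ε ^ 2) * ∫ x in A, exp (-I x) ∂μ := by
  rw [← integral_const_mul]
  exact setIntegral_mono_on (integrableOn_exp_neg_div_sq hI hA hmin hint hε hε1)
    (hint.const_mul _) hA fun x hx => exp_neg_div_sq_le (hmin x hx) hε hε1

variable [PseudoMetricSpace α] [ProperSpace α] [OpensMeasurableSpace α] [μ.IsOpenPosMeasure]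
  [IsFiniteMeasureOnCompacts μ] {x₀ : α}

theorem exists_pos_mul_exp_le_setIntegral_exp_neg_div_sq (hI : ContinuousAt I x₀)
    (hx₀ : x₀ ∈ interior A) {δ : ℝ} (hδ : 0 < δ) :
    ∃ v > 0, ∀ ε, IntegrableOn (fun x => exp (-I x / ε ^ 2)) A μ →
      v * exp (-(I x₀ + δ) / ε ^ 2) ≤ ∫ x in A, exp (-I x / ε ^ 2) ∂μ := by
  have hnear : ∀ᶠ x in 𝓝 x₀, x ∈ A ∧ I x < I x₀ + δ :=
    Eventually.and (mem_interior_iff_mem_nhds.1 hx₀) (hI.eventually (gt_mem_nhds (by linarith)))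
  obtain ⟨r, hr, hball⟩ := Metric.eventually_nhds_iff_ball.1 hnear
  refine ⟨μ.real (Metric.ball x₀ r), ENNReal.toReal_pos (Metric.measure_ball_pos μ x₀ hr).ne'
    measure_ball_lt_top.ne, fun ε hint => ?_⟩
  have hsub : Metric.ball x₀ r ⊆ A := fun x hx => (hball x hx).1
  calc _ = exp (-(I x₀ + δ) / ε ^ 2) * μ.real (Metric.ball x₀ r) := mul_comm _ _
    _ ≤ ∫ x in Metric.ball x₀ r, exp (-I x / ε ^ 2) ∂μ :=
      setIntegral_ge_of_const_le_real measurableSet_ball measure_ball_lt_top.ne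
        (fun x hx => by gcongr; exact (hball x hx).2.le) (hint.mono_set hsub)
    _ ≤ ∫ x in A, exp (-I x / ε ^ 2) ∂μ :=
      setIntegral_mono_set hint (.of_forall fun _ => exp_nonneg _) hsub.eventuallyLE

theorem tendsto_sq_mul_log_setIntegral_exp_neg_div_sq (hI : Measurable I)
    (hI₀ : ContinuousAt I x₀) (hA : MeasurableSet A) (hx₀ : x₀ ∈ interior A)
    (hmin : ∀ x ∈ A, I x₀ ≤ I x) (hint : IntegrableOn (fun x => exp (-I x)) A μ) :
    Tendsto (fun ε => ε ^ 2 * log (∫ x in A, exp (-I x / ε ^ 2) ∂μ)) (𝓝[>] 0)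
      (𝓝 (-I x₀)) := by
  have hsmall : ∀ᶠ ε in 𝓝[>] (0 : ℝ), ε ∈ Ioc 0 1 := Ioc_mem_nhdsGT one_pos
  refine tendsto_sq_mul_log_of_exp_bounds (fun δ hδ => ?_)
    ⟨exp (I x₀) * ∫ x in A, exp (-I x) ∂μ, hsmall.mono fun ε hε => ?_⟩
  · obtain ⟨v, hv, hlow⟩ := exists_pos_mul_exp_le_setIntegral_exp_neg_div_sq (μ := μ) hI₀ hx₀ hδ
    exact ⟨v, hv, hsmall.mono fun ε hε =>
      hlow ε (integrableOn_exp_neg_div_sq hI hA hmin hint hε.1 hε.2)⟩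
  · calc _ ≤ exp (I x₀ - I x₀ / ε ^ 2) * ∫ x in A, exp (-I x) ∂μ :=
          setIntegral_exp_neg_div_sq_le hI hA hmin hint hε.1 hε.2
      _ = _ := by rw [sub_eq_add_neg, exp_add, neg_div]; ring

end Laplace

theorem laplace_method_general
    (N : ℕ) (σ Δt : ℝ) (hσ : 0 < σ) (hΔt : 0 < Δt)
    (I : EuclideanSpace ℝ (Fin N) → ℝ) (hI : Continuous I)
    (hgrowth : ∃ c > (0:ℝ), ∃ R : ℝ, ∀ x, R ≤ ‖x‖ → c * ‖x‖ ^ 2 ≤ I x)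
    (A : Set (EuclideanSpace ℝ (Fin N))) (hA : MeasurableSet A)
    (xstar : EuclideanSpace ℝ (Fin N)) (hxstar : xstar ∈ interior A)
    (hmin : ∀ x ∈ A, I xstar ≤ I x) :
    Tendsto
      (fun ε : ℝ =>
        ε ^ 2 *
          Real.log (∫ x in A,
            (2 * π * ε ^ 2 * σ ^ 2 * Δt) ^ (-(N : ℝ) / 2) * Real.exp (-(I x) / ε ^ 2)))
      (nhdsWithin 0 (Set.Ioi 0)) (nhds (-(I xstar))) := by
  obtain ⟨c, hc, R, hR⟩ := hgrowth
  have hint := (integrable_exp_neg_of_quadratic_growth hI hc hR).integrableOn (s := A)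
  have hlaplace := tendsto_sq_mul_log_setIntegral_exp_neg_div_sq hI.measurable hI.continuousAt
    hA hxstar hmin hint
  have hprefactor := tendsto_sq_mul_log_rpow_mul_sq (a := 2 * π * σ ^ 2 * Δt) (by positivity)
    (-(N : ℝ) / 2)
  obtain ⟨v, hv, hlow⟩ :=
    exists_pos_mul_exp_le_setIntegral_exp_neg_div_sq (μ := volume) hI.continuousAt hxstar one_pos
  refine (zero_add (-I xstar) ▸ hprefactor.add hlaplace).congr' ?_
  filter_upwards [Ioc_mem_nhdsGT one_pos] with ε ⟨hε0, hε1⟩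
  have hpos : 0 < ∫ x in A, exp (-I x / ε ^ 2) := lt_of_lt_of_le (by positivity)
    (hlow ε (integrableOn_exp_neg_div_sq hI.measurable hA hmin hint hε0 hε1))
  rw [integral_const_mul, log_mul (by positivity) hpos.ne', mul_add,
    show 2 * π * ε ^ 2 * σ ^ 2 * Δt = 2 * π * σ ^ 2 * Δt * ε ^ 2 by ring]

/-- Laplace's method for the rescaled Gaussian-type integral: if `I` is continuous,
nonnegative, grows at least quadratically, and attains its minimum over the measurable
set `A` at `x*` lying in the interior of `A`, then
`ε² log ∫_A (2πε²σ²Δt)^{-N/2} exp(-I(x)/ε²) dx → -I(x*)` as `ε → 0⁺`. -/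
theorem laplace_method
    (N : ℕ) (hN : 0 < N) (σ Δt : ℝ) (hσ : 0 < σ) (hΔt : 0 < Δt)
    (I : EuclideanSpace ℝ (Fin N) → ℝ) (hI : Continuous I)
    (hInonneg : ∀ x, 0 ≤ I x)
    (hgrowth : ∃ c > (0:ℝ), ∃ R : ℝ, ∀ x, R ≤ ‖x‖ → c * ‖x‖ ^ 2 ≤ I x)
    (A : Set (EuclideanSpace ℝ (Fin N))) (hA : MeasurableSet A)
    (xstar : EuclideanSpace ℝ (Fin N)) (hxstar : xstar ∈ interior A)
    (hmin : ∀ x ∈ A, I xstar ≤ I x) :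
    Tendsto
      (fun ε : ℝ =>
        ε ^ 2 *
          Real.log (∫ x in A,
            (2 * π * ε ^ 2 * σ ^ 2 * Δt) ^ (-(N : ℝ) / 2) * Real.exp (-(I x) / ε ^ 2)))
      (nhdsWithin 0 (Set.Ioi 0)) (nhds (-(I xstar))) :=
  laplace_method_general N σ Δt hσ hΔt I hI hgrowth A hA xstar hxstar hmin
end

section
/- If B is the set of paths u with u(0) = u₀ that hit the level u₀/2 on [0,T], then inf_{u ∈ B} (1/(2σ²)) ∫₀ᵀ (u')² dt = u₀² / (8 σ² T). -/
/-!
Cauchy–Schwarz gives the lower bound: if the path reaches `u₀/2` at a time `t ≤ T`, then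
`(u₀/2)² ≤ (∫₀ᵗ u')² ≤ t ∫₀ᵗ u'² ≤ T ∫₀ᵀ u'²`. The straight line from `u₀` to `u₀/2` on `[0,T]`
attains it.
-/

open MeasureTheory intervalIntegral

theorem intervalIntegral_sub_const_sq {f : ℝ → ℝ} {a b : ℝ} (c : ℝ)
    (hf : IntervalIntegrable f volume a b)
    (hf2 : IntervalIntegrable (fun x => f x ^ 2) volume a b) :
    ∫ x in a..b, (f x - c) ^ 2
      = (∫ x in a..b, f x ^ 2) - 2 * c * (∫ x in a..b, f x) + (b - a) * c ^ 2 := by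
  have hexpand : ∀ x, (f x - c) ^ 2 = (f x ^ 2 - (2 * c) * f x) + c ^ 2 := fun x => by ring
  simp_rw [hexpand]
  rw [integral_add (hf2.sub (hf.const_mul _)) intervalIntegrable_const,
    integral_sub hf2 (hf.const_mul _), intervalIntegral.integral_const_mul,
    intervalIntegral.integral_const, smul_eq_mul]

theorem sq_intervalIntegral_le_mul_intervalIntegral_sq {f : ℝ → ℝ} {a b : ℝ} (hab : a ≤ b)
    (hf : IntervalIntegrable f volume a b)
    (hf2 : IntervalIntegrable (fun x => f x ^ 2) volume a b) :
    (∫ x in a..b, f x) ^ 2 ≤ (b - a) * ∫ x in a..b, f x ^ 2 := by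
  rcases hab.eq_or_lt with rfl | hlt
  · simp
  set I := ∫ x in a..b, f x
  have hpos : 0 < b - a := sub_pos.2 hlt
  -- Minimize `∫ (f - c)² ≥ 0` over `c`: the mean `c = I / (b - a)` is optimal.
  have hvar : 0 ≤ ∫ x in a..b, (f x - I / (b - a)) ^ 2 :=
    integral_nonneg hab fun _ _ => sq_nonneg _
  rw [intervalIntegral_sub_const_sq _ hf hf2] at hvar
  have hmean : (b - a) * (I / (b - a)) = I := mul_div_cancel₀ I hpos.ne'
  nlinarith [mul_nonneg hpos.le hvar]

theorem sq_intervalIntegral_le_of_mem_Icc {f : ℝ → ℝ} {a b t : ℝ} (ht : t ∈ Set.Icc a b)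
    (hf : IntegrableOn f (Set.Icc a b)) (hf2 : IntegrableOn (fun x => f x ^ 2) (Set.Icc a b)) :
    (∫ x in a..t, f x) ^ 2 ≤ (b - a) * ∫ x in a..b, f x ^ 2 := by
  obtain ⟨hat, htb⟩ := ht
  have hsub : Set.uIcc a t ⊆ Set.Icc a b := by
    rw [Set.uIcc_of_le hat]; exact Set.Icc_subset_Icc le_rfl htb
  have hnonneg : 0 ≤ ∫ x in a..t, f x ^ 2 := integral_nonneg hat fun _ _ => sq_nonneg _
  calc (∫ x in a..t, f x) ^ 2
      ≤ (t - a) * ∫ x in a..t, f x ^ 2 :=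
        sq_intervalIntegral_le_mul_intervalIntegral_sq hat
          ((hf.mono_set hsub).intervalIntegrable) ((hf2.mono_set hsub).intervalIntegrable)
    _ ≤ (b - a) * ∫ x in a..t, f x ^ 2 := by gcongr
    _ ≤ (b - a) * ∫ x in a..b, f x ^ 2 := by
        refine mul_le_mul_of_nonneg_left (integral_mono_interval le_rfl hat htb
          (Filter.Eventually.of_forall fun _ => sq_nonneg _) ?_) (by linarith)
        exact IntegrableOn.intervalIntegrable (by rwa [Set.uIcc_of_le (hat.trans htb)])

theorem le_action_of_hits_half {y : ℝ → ℝ} {T u₀ t : ℝ} (σ : ℝ) (hu₀ : 0 ≤ u₀)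
    (hy : IntegrableOn y (Set.Icc 0 T)) (hy2 : IntegrableOn (fun s => y s ^ 2) (Set.Icc 0 T))
    (ht : t ∈ Set.Icc 0 T) (hhit : u₀ + (∫ s in (0:ℝ)..t, y s) ≤ u₀ / 2) :
    u₀ ^ 2 / (8 * σ ^ 2 * T) ≤ (1 / (2 * σ ^ 2)) * ∫ s in (0:ℝ)..T, y s ^ 2 := by
  have hT : 0 ≤ T := ht.1.trans ht.2
  have hcs := sq_intervalIntegral_le_of_mem_Icc ht hy hy2
  rw [sub_zero] at hcs
  have hdrop : u₀ ^ 2 / 4 ≤ (∫ s in (0:ℝ)..T, y s ^ 2) * T := by nlinarith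
  calc u₀ ^ 2 / (8 * σ ^ 2 * T) = (1 / (2 * σ ^ 2)) * (u₀ ^ 2 / 4 / T) := by ring
    _ ≤ (1 / (2 * σ ^ 2)) * ∫ s in (0:ℝ)..T, y s ^ 2 := by
        gcongr
        exact div_le_of_le_mul₀ hT (integral_nonneg hT fun _ _ => sq_nonneg _) hdrop

theorem subsonic_inflow_action_infimum_general
    (T σ u₀ : ℝ) (hT : 0 < T) (hu₀ : 0 < u₀) :
    sInf {r : ℝ |
        ∃ y : ℝ → ℝ, IntegrableOn y (Set.Icc 0 T) ∧
          IntegrableOn (fun t => (y t) ^ 2) (Set.Icc 0 T) ∧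
          (∃ t ∈ Set.Icc (0:ℝ) T, u₀ + (∫ s in (0:ℝ)..t, y s) ≤ u₀ / 2) ∧
          r = (1 / (2 * σ ^ 2)) * ∫ t in (0:ℝ)..T, (y t) ^ 2}
      = u₀ ^ 2 / (8 * σ ^ 2 * T) := by
  refine IsLeast.csInf_eq ⟨?_, ?_⟩
  · refine ⟨fun _ => -u₀ / (2 * T), integrableOn_const measure_Icc_lt_top.ne,
        integrableOn_const measure_Icc_lt_top.ne, ⟨T, Set.right_mem_Icc.2 hT.le, ?_⟩, ?_⟩
    all_goals
      rw [intervalIntegral.integral_const, sub_zero, smul_eq_mul]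
      field_simp
    · linarith
    · ring
  · rintro r ⟨y, hy, hy2, ⟨t, ht, hhit⟩, rfl⟩
    exact le_action_of_hits_half σ hu₀.le hy hy2 ht hhit

/-- The infimum of the action `(1/(2σ²)) ∫₀ᵀ (u')² dt` over Cameron–Martin paths starting
at `u₀ > 0` that hit the level `u₀/2` on `[0,T]` equals `u₀²/(8σ²T)`. -/
theorem subsonic_inflow_action_infimum
    (T σ u₀ : ℝ) (hT : 0 < T) (hσ : 0 < σ) (hu₀ : 0 < u₀) :
    sInf {r : ℝ |
        ∃ y : ℝ → ℝ, IntegrableOn y (Set.Icc 0 T) ∧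
          IntegrableOn (fun t => (y t) ^ 2) (Set.Icc 0 T) ∧
          (∃ t ∈ Set.Icc (0:ℝ) T, u₀ + (∫ s in (0:ℝ)..t, y s) ≤ u₀ / 2) ∧
          r = (1 / (2 * σ ^ 2)) * ∫ t in (0:ℝ)..T, (y t) ^ 2}
      = u₀ ^ 2 / (8 * σ ^ 2 * T) :=
  subsonic_inflow_action_infimum_general T σ u₀ hT hu₀
end
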